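/- arXiv:2303.08572 — 5 statements merged into one kernel-verified Lean document; each statement's English description precedes it below -/
import Mathlib

section
/- Let 𝒳 and 𝒴 be nonempty finite types, β a pmf on 𝒳, γ a pmf on 𝒴, and σ : 𝒳 → Equiv.Perm 𝒴 a family of permutations of 𝒴. Let U_X and U_Y be independent random variables with U_X distributed according to β on 𝒳 and U_Y distributed according to γ on 𝒴 (formally: their joint law is the product pmf β ⊗ γ on 𝒳 × 𝒴). Define X := U_X and Y := f_Y(X, U_Y) where f_Y(x, u) = (σ x)⁻¹(u). Then for every (x, y) ∈ 𝒳 × 𝒴 the joint distribution of (X, Y) satisfies P[X = x, Y = y] = β x · γ(σ x y); equivalently, the pushforward of the product pmf β ⊗ γ under the map (x, u) ↦ (x, (σ x)⁻¹ u) assigns probability β x · γ(σ x y) to the point (x, y). In particular the structural causal model Y := f_Y(X, U_Y) with exogenous variable U_Y taking values in 𝒴 and independent of X entails exactly the uniform-channel joint pmf p(x,y) = β x · γ(σ x y). -/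
open Finset

/-- The SCM `X := U_X`, `Y := f_Y(X, U_Y)` with `f_Y (x, u) = (σ x)⁻¹ u`, where
the exogenous variables `U_X ~ β` and `U_Y ~ γ` are independent (joint law the
product pmf `β ⊗ γ`), entails exactly the uniform-channel joint pmf
`p(x,y) = β x · γ (σ x y)`: the pushforward of the product pmf under
`(x, u) ↦ (x, (σ x)⁻¹ u)` assigns probability `β x · γ (σ x y)` to `(x, y)`. -/
theorem scm_entails_uniform_channel
    {𝒳 𝒴 : Type*} [Fintype 𝒳] [Fintype 𝒴] [Nonempty 𝒳] [Nonempty 𝒴]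
    [DecidableEq 𝒳] [DecidableEq 𝒴]
    (β : 𝒳 → ℝ) (γ : 𝒴 → ℝ) (σ : 𝒳 → Equiv.Perm 𝒴)
    (hβ0 : ∀ x, 0 ≤ β x) (hβ1 : ∑ x, β x = 1)
    (hγ0 : ∀ y, 0 ≤ γ y) (hγ1 : ∑ y, γ y = 1) :
    ∀ (x : 𝒳) (y : 𝒴),
      (∑ z : 𝒳 × 𝒴, if (z.1, (σ z.1)⁻¹ z.2) = (x, y) then β z.1 * γ z.2 else 0)
        = β x * γ (σ x y) := by
  intro x y
  rw [Fintype.sum_eq_single (x, σ x y)]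
  · simp
  · intro z hz
    rw [if_neg]
    intro h
    apply hz
    obtain ⟨h1, h2⟩ := Prod.mk.injEq _ _ _ _ ▸ h
    subst h1
    have : z.2 = σ z.1 y := by
      have := congrArg (σ z.1) h2
      simpa using this
    exact Prod.ext rfl this
end

section
/- Let m, n ≥ 2 be natural numbers and fix a family of permutations σ : Fin m → Equiv.Perm (Fin n). For a parameter pair (b, g) ∈ (Fin (m−1) → ℝ) × (Fin (n−1) → ℝ), define β : Fin m → ℝ by β i = b i for i < m−1 and β (m−1) = 1 − ∑_i b i, and define γ : Fin n → ℝ analogously from g. Define a(y, x) = β x · γ(σ x y) and A(y) = ∑_{x} a(y, x). Let S ⊆ (Fin (m−1) → ℝ) × (Fin (n−1) → ℝ) be the set of parameters (b, g) such that all of the following hold: (i) β x > 0 for all x and γ y ≥ 0 for all y (so β and γ are pmfs with β of full support); (ii) A(y) > 0 for all y (the marginal of Y has full support); (iii) the rows of the forward channel are not all equal, i.e., there exist x, x', y with γ(σ x y) ≠ γ(σ x' y) (X and Y are not independent); (iv) the reverse channel is a uniform channel, i.e., there exists a family ρ : Fin n → Equiv.Perm (Fin m) with a(0, x)/A(0)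 = a(y, ρ y x)/A(y) for all y ∈ Fin n and x ∈ Fin m. Then S has Lebesgue measure zero in ℝ^{m−1} × ℝ^{n−1} (i.e., its volume with respect to the product Lebesgue measure is 0). -/
/-!
Clearing the positive denominators, the reverse-UC condition says that for one of the finitely
many families `ρ` all the polynomials `reverseDefectPoly σ ρ y₀ x y` in the parameters vanish.
The zero set of a nonzero real polynomial is Lebesgue-null, so it suffices that for each `ρ` one
of them is a nonzero polynomial. Otherwise the identity holds on the whole affine hyperplanes
`∑ β = 1`, `∑ γ = 1`, signed points included. Testing it at a point mass `β` and the uniform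
`γ` forces `ρ = id`; at `β = 2 δ_a - δ_b` it becomes
`γ (σ a y₀) * γ (σ b y) = γ (σ a y) * γ (σ b y₀)` for all `γ`, and point masses (and a signed
combination of two of them) for `γ` then force `σ a = σ b`, so `X` and `Y` would be independent.
-/

open Finset MeasureTheory

namespace MvPolynomial

/-- Fubini over the last `k` coordinates: off the null zero set of a nonzero coefficient of `P`
seen as a polynomial in the first variable, each slice is a finite root set. -/
theorem volume_zeroSet_fin :
    ∀ {k : ℕ} {P : MvPolynomial (Fin k) ℝ}, P ≠ 0 → volume {x | eval x P = 0} = 0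
  | 0, P, hP => by
    obtain ⟨c, rfl⟩ := C_surjective (Fin 0) P
    simp_all
  | k + 1, P, hP => by
    set Q := finSuccEquiv ℝ k P
    obtain ⟨i, hi⟩ : ∃ i, Q.coeff i ≠ 0 := by
      by_contra! h
      exact hP ((EmbeddingLike.map_eq_zero_iff).1 (Polynomial.ext h))
    have hZ : MeasurableSet {x : Fin (k + 1) → ℝ | eval x P = 0} :=
      (isClosed_eq (continuous_eval P) continuous_const).measurableSet
    have hcons := (volume_preserving_piFinSuccAbove (fun _ : Fin (k + 1) => ℝ) 0).symm
    rw [← hcons.measure_preimage_equiv, Measure.volume_eq_prod,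
      Measure.prod_apply_symm (hZ.preimage (MeasurableEquiv.measurable _))]
    refine (lintegral_congr_ae ?_).trans lintegral_zero
    filter_upwards [measure_eq_zero_iff_ae_notMem.1 (volume_zeroSet_fin hi)] with s hs
    have hQs : Polynomial.map (eval s) Q ≠ 0 := fun h =>
      hs (by rw [← Polynomial.coeff_map, h, Polynomial.coeff_zero])
    refine measure_mono_null (fun a ha => ?_)
      ((Polynomial.finite_setOfPred_isRoot hQs).measure_zero _)
    simpa [MeasurableEquiv.piFinSuccAbove_symm_apply, Fin.insertNthEquiv,
      eval_eq_eval_mv_eval'] using ha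

theorem volume_zeroSet {ι : Type*} [Fintype ι] {P : MvPolynomial ι ℝ} (hP : P ≠ 0) :
    volume {x : ι → ℝ | eval x P = 0} = 0 := by
  rw [← (volume_measurePreserving_piCongrLeft (fun _ => ℝ)
    (Fintype.equivFin ι)).symm.measure_preimage_equiv]
  convert volume_zeroSet_fin ((rename_injective _ (Fintype.equivFin ι).injective).ne hP) using 2
  ext y
  simp only [Set.mem_preimage, Set.mem_ofPred_eq, eval_rename]
  rfl

theorem volume_zeroSet_sumElim {ι κ : Type*} [Fintype ι] [Fintype κ]
    {P : MvPolynomial (ι ⊕ κ) ℝ} (hP : P ≠ 0) :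
    volume {p : (ι → ℝ) × (κ → ℝ) | eval (Sum.elim p.1 p.2) P = 0} = 0 := by
  rw [← (volume_measurePreserving_sumPiEquivProdPi fun _ : ι ⊕ κ => ℝ).measure_preimage_equiv]
  convert volume_zeroSet hP using 2
  ext x
  exact iff_of_eq (congrArg (fun y => eval y P = 0) (Sum.elim_comp_inl_inr x))

end MvPolynomial

noncomputable def simplexChart (k : ℕ) (b : Fin (k - 1) → ℝ) : Fin k → ℝ :=
  fun i => if h : (i : ℕ) < k - 1 then b ⟨i, h⟩ else 1 - ∑ j, b j

theorem simplexChart_restrict {k : ℕ} (hk : 1 ≤ k) {f : Fin k → ℝ} (hf : ∑ i, f i = 1) :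
    simplexChart k (fun j => f ⟨j, by omega⟩) = f := by
  obtain ⟨k, rfl⟩ : ∃ k', k = k' + 1 := ⟨k - 1, by omega⟩
  funext i
  rw [Fin.sum_univ_castSucc] at hf
  by_cases hi : (i : ℕ) < k
  · simp [simplexChart, hi]
  · obtain rfl : i = Fin.last k := Fin.ext (by simp; omega)
    simp only [simplexChart, add_tsub_cancel_right, Fin.val_last, lt_self_iff_false, dite_false]
    change 1 - ∑ j : Fin k, f (Fin.castSucc j) = _
    linarith

open MvPolynomial in
noncomputable def simplexChartPoly (k : ℕ) (i : Fin k) : MvPolynomial (Fin (k - 1)) ℝ :=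
  if h : (i : ℕ) < k - 1 then X ⟨i, h⟩ else 1 - ∑ j, X j

theorem eval_simplexChartPoly (k : ℕ) (b : Fin (k - 1) → ℝ) (i : Fin k) :
    MvPolynomial.eval b (simplexChartPoly k i) = simplexChart k b i := by
  unfold simplexChartPoly simplexChart
  split <;> simp

theorem Equiv.Perm.eq_of_forall_cross_mul_eq {Y : Type*} [Fintype Y] {s t : Equiv.Perm Y} (y₀ : Y)
    (h : ∀ γ : Y → ℝ, ∑ y, γ y = 1 → ∀ y, γ (s y₀) * γ (t y) = γ (s y) * γ (t y₀)) : s = t := by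
  classical
  have h₀ : t y₀ = s y₀ := by
    by_contra hne
    have := h (Pi.single (s y₀) 1) (by simp) (t.symm (s y₀))
    simp [Pi.single_apply, hne] at this
  ext y
  by_contra hne
  have hy : y ≠ y₀ := by rintro rfl; exact hne h₀.symm
  have hs : s y ≠ s y₀ := s.injective.ne hy
  have ht : t y ≠ s y₀ := h₀ ▸ t.injective.ne hy
  have := h (Pi.single (s y₀) 2 - Pi.single (s y) 1) (by simp [sum_sub_distrib]; norm_num) y
  simp [hs, ht, hne, h₀, Ne.symm hs] at this

section ReverseChannel

variable {X Y : Type*} [Fintype X]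

/-- `a y₀ x * A y - a y (ρ y x) * A y₀` with `a y x = β x * γ (σ x y)` and `A y = ∑ x, a y x`:
the reverse-UC equation between rows `y₀` and `y` with its denominators cleared. -/
def reverseDefect {R : Type*} [CommRing R] (σ : X → Equiv.Perm Y) (ρ : Y → Equiv.Perm X) (y₀ : Y)
    (β : X → R) (γ : Y → R) (x : X) (y : Y) : R :=
  β x * γ (σ x y₀) * ∑ x', β x' * γ (σ x' y) -
    β (ρ y x) * γ (σ (ρ y x) y) * ∑ x', β x' * γ (σ x' y₀)

theorem map_reverseDefect {R S : Type*} [CommRing R] [CommRing S] (f : R →+* S)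
    (σ : X → Equiv.Perm Y) (ρ : Y → Equiv.Perm X) (y₀ : Y) (β : X → R) (γ : Y → R)
    (x : X) (y : Y) :
    f (reverseDefect σ ρ y₀ β γ x y) = reverseDefect σ ρ y₀ (f ∘ β) (f ∘ γ) x y := by
  simp [reverseDefect, map_sum]

variable [Fintype Y]

def ReverseDefectVanishes (σ : X → Equiv.Perm Y) (ρ : Y → Equiv.Perm X) (y₀ : Y) : Prop :=
  ∀ (β : X → ℝ) (γ : Y → ℝ), ∑ x, β x = 1 → ∑ y, γ y = 1 →
    ∀ x y, reverseDefect σ ρ y₀ β γ x y = 0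

variable {σ : X → Equiv.Perm Y} {ρ : Y → Equiv.Perm X} {y₀ : Y}

theorem ReverseDefectVanishes.apply_eq_self (h : ReverseDefectVanishes σ ρ y₀) (y : Y) (x : X) :
    ρ y x = x := by
  classical
  by_contra hne
  have hY : (Fintype.card Y : ℝ) ≠ 0 := Nat.cast_ne_zero.2 (Fintype.card_pos_iff.2 ⟨y⟩).ne'
  have := h (Pi.single x 1) (fun _ => (Fintype.card Y : ℝ)⁻¹) (by simp) (by simp [hY]) x y
  simp [reverseDefect, Pi.single_apply, hne, hY] at this

theorem ReverseDefectVanishes.cross_mul_eq (h : ReverseDefectVanishes σ ρ y₀) {a b : X}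
    (hab : a ≠ b) {γ : Y → ℝ} (hγ : ∑ y, γ y = 1) (y : Y) :
    γ (σ a y₀) * γ (σ b y) = γ (σ a y) * γ (σ b y₀) := by
  classical
  have := h (Pi.single a 2 - Pi.single b 1) γ (by simp [sum_sub_distrib]; norm_num) hγ a y
  simp [reverseDefect, h.apply_eq_self, Pi.single_apply, hab, sub_mul, sum_sub_distrib] at this
  linear_combination -this / 2

theorem ReverseDefectVanishes.perm_eq (h : ReverseDefectVanishes σ ρ y₀) (a b : X) :
    σ a = σ b := by
  obtain rfl | hab := eq_or_ne a b
  · rfl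
  · exact Equiv.Perm.eq_of_forall_cross_mul_eq y₀ fun γ hγ y => h.cross_mul_eq hab hγ y

end ReverseChannel

section ChartedDefect

variable {m n : ℕ} (σ : Fin m → Equiv.Perm (Fin n)) (ρ : Fin n → Equiv.Perm (Fin m)) (y₀ : Fin n)

open MvPolynomial in
noncomputable def reverseDefectPoly (x : Fin m) (y : Fin n) :
    MvPolynomial (Fin (m - 1) ⊕ Fin (n - 1)) ℝ :=
  reverseDefect σ ρ y₀ (fun i => rename Sum.inl (simplexChartPoly m i))
    (fun j => rename Sum.inr (simplexChartPoly n j)) x y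

theorem eval_reverseDefectPoly (b : Fin (m - 1) → ℝ) (g : Fin (n - 1) → ℝ) (x : Fin m)
    (y : Fin n) :
    MvPolynomial.eval (Sum.elim b g) (reverseDefectPoly σ ρ y₀ x y) =
      reverseDefect σ ρ y₀ (simplexChart m b) (simplexChart n g) x y := by
  rw [reverseDefectPoly, map_reverseDefect]
  congr 1 <;> funext i <;> simp [MvPolynomial.eval_rename, eval_simplexChartPoly]

variable {σ} in
theorem exists_reverseDefectPoly_ne_zero {u v : Fin m} (huv : σ u ≠ σ v) :
    ∃ x y, reverseDefectPoly σ ρ y₀ x y ≠ 0 := by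
  by_contra! h
  refine huv (ReverseDefectVanishes.perm_eq (ρ := ρ) (y₀ := y₀) (fun β γ hβ hγ x y => ?_) u v)
  rw [← simplexChart_restrict u.pos hβ, ← simplexChart_restrict y₀.pos hγ,
    ← eval_reverseDefectPoly, h, map_zero]

end ChartedDefect

/-- Identifiability of the uniform channel model: the set of parameters
`(b, g)` (parametrizing the cause marginal `β` and the channel vector `γ` by
their first `m-1`, resp. `n-1`, coordinates) for which the forward channel is
the uniform channel given by `σ`, the marginals have full support, `X` and `Y`
are not independent, and the reverse channel is also a uniform channel, has
Lebesgue measure zero. -/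
theorem ucm_identifiability
    (m n : ℕ) (hn : 2 ≤ n) (σ : Fin m → Equiv.Perm (Fin n)) :
    volume {p : (Fin (m - 1) → ℝ) × (Fin (n - 1) → ℝ) |
      let β : Fin m → ℝ :=
        fun i => if h : (i : ℕ) < m - 1 then p.1 ⟨i, h⟩ else 1 - ∑ j, p.1 j
      let γ : Fin n → ℝ :=
        fun i => if h : (i : ℕ) < n - 1 then p.2 ⟨i, h⟩ else 1 - ∑ j, p.2 j
      let a : Fin n → Fin m → ℝ := fun y x => β x * γ (σ x y)
      let A : Fin n → ℝ := fun y => ∑ x, a y x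
      (∀ x, 0 < β x) ∧ (∀ y, 0 ≤ γ y) ∧ (∀ y, 0 < A y) ∧
      (∃ x x' y, γ (σ x y) ≠ γ (σ x' y)) ∧
      (∃ ρ : Fin n → Equiv.Perm (Fin m), ∀ (y : Fin n) (x : Fin m),
        a ⟨0, by omega⟩ x / A ⟨0, by omega⟩ = a y (ρ y x) / A y)} = 0 := by
  let y₀ : Fin n := ⟨0, by omega⟩
  by_cases hσ : ∃ u v, σ u ≠ σ v
  · obtain ⟨u, v, huv⟩ := hσ
    refine measure_mono_null (t := ⋃ ρ, {p | ∀ x y,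
      MvPolynomial.eval (Sum.elim p.1 p.2) (reverseDefectPoly σ ρ y₀ x y) = 0}) ?_
      (measure_iUnion_null fun ρ => ?_)
    · rintro p ⟨-, -, hA, -, ρ, hρ⟩
      refine Set.mem_iUnion.2 ⟨ρ, fun x y => ?_⟩
      rw [eval_reverseDefectPoly, reverseDefect, sub_eq_zero]
      exact (div_eq_div_iff (hA y₀).ne' (hA y).ne').1 (hρ y x)
    · obtain ⟨x, y, hxy⟩ := exists_reverseDefectPoly_ne_zero ρ y₀ huv
      exact measure_mono_null (fun p hp => hp x y) (MvPolynomial.volume_zeroSet_sumElim hxy)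
  · push Not at hσ
    refine measure_mono_null ?_ measure_empty
    rintro p ⟨-, -, -, ⟨x, x', y, hne⟩, -⟩
    exact hne (by rw [hσ x x'])
end

section
/- Let α, β ∈ (0, 1). Consider the binary uniform channel with forward channel matrix rows (1−α, α) and (α, 1−α) and cause marginal (β, 1−β), and define the entries of the first column of the reverse (Bayes) channel: a = (1−α)·β / ((1−α)·β + α·(1−β)) and c = α·β / (α·β + (1−α)·(1−β)). Then the reverse channel is a uniform channel, i.e., (a = c or a = 1 − c), if and only if α = 1/2 or β = 1/2. -/
/-- Binary case of the identifiability of the uniform channel model: for a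
binary symmetric (uniform) channel with error probability `α` and cause
marginal `(β, 1-β)`, the reverse (Bayes) channel, with first-column entries
`a` and `c`, is a uniform channel (`a = c` or `a = 1 - c`) if and only if
`α = 1/2` or `β = 1/2`. -/
theorem binary_ucm_identifiability
    (α β a c : ℝ) (hα : 0 < α ∧ α < 1) (hβ : 0 < β ∧ β < 1)
    (ha : a = (1 - α) * β / ((1 - α) * β + α * (1 - β)))
    (hc : c = α * β / (α * β + (1 - α) * (1 - β))) :
    (a = c ∨ a = 1 - c) ↔ (α = 1 / 2 ∨ β = 1 / 2) := by
  obtain ⟨hα0, hα1⟩ := hα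
  obtain ⟨hβ0, hβ1⟩ := hβ
  have hD1 : (1 - α) * β + α * (1 - β) > 0 := by nlinarith
  have hD2 : α * β + (1 - α) * (1 - β) > 0 := by nlinarith
  subst ha hc
  constructor
  · rintro (h | h)
    · left
      rw [div_eq_div_iff (by linarith) (by linarith)] at h
      have : β * ((1 - α) - α) * ((1 - α) + α) = 0 := by nlinarith
      have h2 : (1 - α) - α = 0 := by
        rcases mul_eq_zero.mp this with h3 | h3
        · rcases mul_eq_zero.mp h3 with h4 | h4
          · linarith
          · exact h4
        · linarith
      linarith
    · right
      rw [eq_sub_iff_add_eq, div_add_div _ _ (by linarith) (by linarith),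
        div_eq_one_iff_eq (by positivity)] at h
      have : α * (β - (1 - β)) * (β + (1 - β)) = 0 := by nlinarith
      have h2 : β - (1 - β) = 0 := by
        rcases mul_eq_zero.mp this with h3 | h3
        · rcases mul_eq_zero.mp h3 with h4 | h4
          · linarith
          · exact h4
        · linarith
      linarith
  · rintro (h | h)
    · left; subst h; ring_nf
    · right; subst h
      rw [eq_sub_iff_add_eq]
      field_simp
      ring
end

section
/- Let m, n ≥ 2, fix σ : Fin m → Equiv.Perm (Fin n), and fix a family ρ : Fin n → Equiv.Perm (Fin m) such that ρ y₀ is not the identity permutation for some y₀ ≠ 0. For β : Fin m → ℝ and γ : Fin n → ℝ define a(y, x) = β x · γ(σ x y), A(y) = ∑_x a(y, x), and Q(β, γ) = ∑_{y ≠ 0} ∑_{x} ( a(0, x) · A(y) − a(y, ρ y x) · A(0) )². Then for γ the constant function 1 (γ y = 1 for all y) and any injective β : Fin m → ℝ with ∑_x β x = 1, one has Q(β, γ) > 0. In particular, the polynomial function Q is not identically zero. -/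
open Finset

/-- Key step of the identifiability proof: the sum-of-squares polynomial
`Q_ρ(β, γ)` encoding uniformity of the reverse channel is not identically zero.
Concretely, if some `ρ y₀` (with `y₀ ≠ 0`) is not the identity permutation,
then taking `γ ≡ 1` and any injective `β` summing to `1` yields `Q(β, γ) > 0`. -/
theorem ucm_polynomial_not_identically_zero
    (m n : ℕ) (hm : 2 ≤ m) (hn : 2 ≤ n)
    (σ : Fin m → Equiv.Perm (Fin n)) (ρ : Fin n → Equiv.Perm (Fin m))
    (y₀ : Fin n) (hy₀ : y₀ ≠ ⟨0, by omega⟩) (hρ : ρ y₀ ≠ 1)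
    (β : Fin m → ℝ) (hβinj : Function.Injective β) (hβ1 : ∑ x, β x = 1)
    (γ : Fin n → ℝ) (hγ : ∀ y, γ y = 1) :
    0 < ∑ y ∈ Finset.univ.filter (fun y : Fin n => y ≠ ⟨0, by omega⟩), ∑ x,
        (β x * γ (σ x ⟨0, by omega⟩) * (∑ x', β x' * γ (σ x' y))
          - β (ρ y x) * γ (σ (ρ y x) y) * (∑ x', β x' * γ (σ x' ⟨0, by omega⟩))) ^ 2 := by
  simp only [hγ, mul_one, hβ1]
  obtain ⟨x₀, hx₀⟩ : ∃ x₀, ρ y₀ x₀ ≠ x₀ := by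
    by_contra h
    push_neg at h
    exact hρ (Equiv.ext h)
  apply Finset.sum_pos' (fun y _ => Finset.sum_nonneg fun x _ => sq_nonneg _)
  refine ⟨y₀, Finset.mem_filter.mpr ⟨Finset.mem_univ _, hy₀⟩, ?_⟩
  apply Finset.sum_pos' (fun x _ => sq_nonneg _)
  refine ⟨x₀, Finset.mem_univ _, ?_⟩
  have h : β x₀ - β (ρ y₀ x₀) ≠ 0 :=
    sub_ne_zero.mpr fun h => hx₀ (hβinj h).symm
  calc (0:ℝ) < |β x₀ - β ((ρ y₀) x₀)| ^ 2 := pow_pos (abs_pos.mpr h) 2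
    _ = (β x₀ - β ((ρ y₀) x₀)) ^ 2 := sq_abs _
end

section
/- Let 𝒳 be a nonempty finite type, n ≥ 1, and let N : 𝒳 → Fin n → ℕ be a table of counts with total N_tot = ∑_{x} ∑_{y} N x y > 0. Let τ̂ : 𝒳 → Equiv.Perm (Fin n) be any family of permutations such that for each x the sequence y ↦ N x (τ̂ x y) is nonincreasing in y (i.e., N x (τ̂ x 0) ≥ N x (τ̂ x 1) ≥ ⋯ ≥ N x (τ̂ x (n−1))), and define γ̂ : Fin n → ℝ by γ̂ y = (∑_{x} N x (τ̂ x y)) / N_tot. Then (γ̂, τ̂) is a global maximizer of the log-likelihood: for every γ : Fin n → ℝ with γ y > 0 for all y and ∑_y γ y = 1, and every family τ : 𝒳 → Equiv.Perm (Fin n), it holds that ∑_{x} ∑_{y} N x (τ x y) · log(γ y) ≤ ∑_{x} ∑_{y} N x (τ̂ x y) · log(γ̂ y). -/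
open Finset

private lemma abel_aux (c d : ℕ → ℝ) (hc : ∀ i j : ℕ, i ≤ j → c j ≤ c i)
    (hd : ∀ k : ℕ, 0 ≤ ∑ i ∈ range k, d i) :
    ∀ m : ℕ, c m * ∑ i ∈ range (m + 1), d i ≤ ∑ i ∈ range (m + 1), c i * d i := by
  intro m
  induction m with
  | zero => simp
  | succ m ih =>
      rw [Finset.sum_range_succ d, Finset.sum_range_succ (fun i => c i * d i)]
      have h1 : c (m + 1) * ∑ i ∈ range (m + 1), d i
          ≤ c m * ∑ i ∈ range (m + 1), d i :=
        mul_le_mul_of_nonneg_right (hc m (m + 1) (Nat.le_succ m)) (hd (m + 1))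
      nlinarith [ih]

private lemma abel_nonneg (c d : ℕ → ℝ) (n : ℕ) (hc : ∀ i j : ℕ, i ≤ j → c j ≤ c i)
    (hd : ∀ k : ℕ, 0 ≤ ∑ i ∈ range k, d i) (htot : ∑ i ∈ range n, d i = 0) :
    0 ≤ ∑ i ∈ range n, c i * d i := by
  cases n with
  | zero => simp
  | succ m =>
      have h := abel_aux c d hc hd m
      rw [htot, mul_zero] at h
      exact h

private lemma pt_lemma (p q : ℕ) :
    (if q = 0 then (0 : ℝ) else 1 + Real.log q) * ((p : ℝ) - (q : ℝ))
      ≤ (p : ℝ) * Real.log p - (q : ℝ) * Real.log q := by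
  rcases Nat.eq_zero_or_pos q with hq | hq
  · subst hq
    rw [if_pos rfl, zero_mul]
    rcases Nat.eq_zero_or_pos p with hp | hp
    · subst hp; simp
    · have h1 : (1 : ℝ) ≤ (p : ℝ) := by exact_mod_cast hp
      have h2 := Real.log_nonneg h1
      have h3 : (0:ℝ) ≤ (p : ℝ) * Real.log p := mul_nonneg (by linarith) h2
      simp only [Nat.cast_zero, Real.log_zero, mul_zero, sub_zero]
      exact h3
  · have hq0 : q ≠ 0 := Nat.pos_iff_ne_zero.mp hq
    rw [if_neg hq0]
    have hq1 : (1 : ℝ) ≤ (q : ℝ) := by exact_mod_cast hq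
    have hqpos : (0 : ℝ) < (q : ℝ) := by linarith
    have hlq : (0 : ℝ) ≤ Real.log q := Real.log_nonneg hq1
    rcases Nat.eq_zero_or_pos p with hp | hp
    · subst hp
      simp only [Nat.cast_zero, zero_mul, zero_sub]
      nlinarith
    · have hp1 : (1 : ℝ) ≤ (p : ℝ) := by exact_mod_cast hp
      have hppos : (0 : ℝ) < (p : ℝ) := by linarith
      have hlog : Real.log ((q : ℝ) / (p : ℝ)) ≤ (q : ℝ) / (p : ℝ) - 1 :=
        Real.log_le_sub_one_of_pos (by positivity)
      rw [Real.log_div (ne_of_gt hqpos) (ne_of_gt hppos)] at hlog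
      have hmul : (p : ℝ) * (Real.log q - Real.log p)
          ≤ (p : ℝ) * ((q : ℝ) / (p : ℝ) - 1) :=
        mul_le_mul_of_nonneg_left hlog (le_of_lt hppos)
      have hfs : (p : ℝ) * ((q : ℝ) / (p : ℝ) - 1) = (q : ℝ) - (p : ℝ) := by
        field_simp
      rw [hfs] at hmul
      nlinarith

private lemma card_filter_lt_fin (n m : ℕ) (hm : m ≤ n) :
    (univ.filter (fun i : Fin n => i.val < m)).card = m := by
  have h : univ.filter (fun i : Fin n => i.val < m)
      = (Finset.range m).attachFin (fun a ha => lt_of_lt_of_le (mem_range.mp ha) hm) := by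
    ext i
    simp [Finset.mem_attachFin]
  rw [h, Finset.card_attachFin, Finset.card_range]

private lemma topk (n : ℕ) (h : Fin n → ℕ) (hh : ∀ i j : Fin n, i ≤ j → h j ≤ h i) :
    ∀ k : ℕ, k ≤ n → ∀ e : Fin n → Fin n, Function.Injective e →
      ∑ i ∈ univ.filter (fun i : Fin n => i.val < k), h (e i)
        ≤ ∑ i ∈ univ.filter (fun i : Fin n => i.val < k), h i := by
  intro k
  induction k with
  | zero => intro _ e _; simp
  | succ k ih =>
      intro hk1 e he
      have hkn : k < n := hk1
      have hk : k ≤ n := le_of_lt hkn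
      set kf : Fin n := ⟨k, hkn⟩ with hkf
      have hmemkf : kf ∈ univ.filter (fun i : Fin n => i.val < k + 1) := by
        simp [hkf]
      have hkfnot : kf ∉ univ.filter (fun i : Fin n => i.val < k) := by
        simp [hkf]
      have hins : univ.filter (fun i : Fin n => i.val < k + 1)
          = insert kf (univ.filter (fun i : Fin n => i.val < k)) := by
        ext i
        simp only [mem_filter, mem_univ, true_and, Finset.mem_insert, Fin.ext_iff, hkf]
        omega
      obtain ⟨i0, hi0mem, hi0max⟩ :=
        Finset.exists_max_image (univ.filter (fun i : Fin n => i.val < k + 1)) e ⟨kf, hmemkf⟩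
      have hmax : k ≤ (e i0).val := by
        by_contra hcon
        push_neg at hcon
        have hmap : ∀ i ∈ univ.filter (fun i : Fin n => i.val < k + 1),
            e i ∈ univ.filter (fun i : Fin n => i.val < k) := by
          intro i hi
          have h1 : e i ≤ e i0 := hi0max i hi
          simp only [mem_filter, mem_univ, true_and]
          exact lt_of_le_of_lt (Fin.le_def.mp h1) hcon
        have hcard := Finset.card_le_card_of_injOn e hmap (he.injOn)
        rw [card_filter_lt_fin n (k + 1) hk1, card_filter_lt_fin n k hk] at hcard
        omega
      have hswapmem : ∀ i : Fin n,
          Equiv.swap i0 kf i ∈ univ.filter (fun j : Fin n => j.val < k + 1)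
            ↔ i ∈ univ.filter (fun j : Fin n => j.val < k + 1) := by
        intro i
        rcases eq_or_ne i i0 with rfl | h1
        · simp only [Equiv.swap_apply_left]
          constructor <;> intro _ <;> [exact hi0mem; exact hmemkf]
        rcases eq_or_ne i kf with rfl | h2
        · simp only [Equiv.swap_apply_right]
          constructor <;> intro _ <;> [exact hmemkf; exact hi0mem]
        · rw [Equiv.swap_apply_of_ne_of_ne h1 h2]
      have he' : Function.Injective (fun i => e (Equiv.swap i0 kf i)) :=
        he.comp (Equiv.swap i0 kf).injective
      have hsum1 : ∑ i ∈ univ.filter (fun i : Fin n => i.val < k + 1), h (e i)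
          = ∑ i ∈ univ.filter (fun i : Fin n => i.val < k + 1),
              h (e (Equiv.swap i0 kf i)) := by
        refine (Finset.sum_equiv (Equiv.swap i0 kf) ?_ ?_).symm
        · intro i
          exact (hswapmem i).symm
        · intro i _
          rfl
      rw [hsum1, hins, Finset.sum_insert hkfnot, Finset.sum_insert hkfnot]
      have hterm : h (e (Equiv.swap i0 kf kf)) ≤ h kf := by
        rw [Equiv.swap_apply_right]
        exact hh kf (e i0) (Fin.le_def.mpr hmax)
      have hrest := ih hk (fun i => e (Equiv.swap i0 kf i)) he'
      exact add_le_add hterm hrest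

private lemma range_filter_sum {M : Type*} [AddCommMonoid M] (n k : ℕ) (hk : k ≤ n)
    (F : Fin n → M) :
    ∑ i ∈ range k, (if h : i < n then F ⟨i, h⟩ else 0)
      = ∑ i ∈ univ.filter (fun i : Fin n => i.val < k), F i := by
  refine Finset.sum_bij' (fun (i : ℕ) (hi : i ∈ range k) =>
      (⟨i, lt_of_lt_of_le (mem_range.mp hi) hk⟩ : Fin n))
    (fun (a : Fin n) (_ : a ∈ univ.filter (fun i : Fin n => i.val < k)) => a.val)
    ?_ ?_ ?_ ?_ ?_
  · intro a ha
    simp [mem_range.mp ha]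
  · intro a ha
    simp only [mem_filter, mem_univ, true_and] at ha
    exact mem_range.mpr ha
  · intro a ha
    rfl
  · intro a ha
    rfl
  · intro a ha
    rw [dif_pos (lt_of_lt_of_le (mem_range.mp ha) hk)]

/-- ML estimation of a uniform channel with unknown permutations: if `τopt x`
sorts the counts of row `x` into nonincreasing order and
`γopt y = (∑ x, N x (τopt x y)) / N_tot`, then `(γopt, τopt)` globally
maximizes the log-likelihood over all pmfs `γ` (with positive entries) and all
families of permutations `τ`. -/
theorem ucm_ml_estimate_global_max
    {𝒳 : Type*} [Fintype 𝒳] [Nonempty 𝒳] (n : ℕ) (hn : 1 ≤ n)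
    (N : 𝒳 → Fin n → ℕ) (hN : 0 < ∑ x, ∑ y, N x y)
    (τopt : 𝒳 → Equiv.Perm (Fin n))
    (hτopt : ∀ x, ∀ y y' : Fin n, y ≤ y' → N x (τopt x y') ≤ N x (τopt x y))
    (γ : Fin n → ℝ) (hγ0 : ∀ y, 0 < γ y) (hγ1 : ∑ y, γ y = 1)
    (τ : 𝒳 → Equiv.Perm (Fin n)) :
    ∑ x, ∑ y, (N x (τ x y) : ℝ) * Real.log (γ y)
      ≤ ∑ x, ∑ y, (N x (τopt x y) : ℝ) *
          Real.log ((∑ x', (N x' (τopt x' y) : ℝ)) / ((∑ x', ∑ y', N x' y' : ℕ) : ℝ)) := by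
  classical
  set Ntot : ℕ := ∑ x, ∑ y, N x y with hNtotdef
  set Rr : ℝ := (Ntot : ℝ) with hRrdef
  have hR0 : (0 : ℝ) < Rr := by rw [hRrdef]; exact_mod_cast hN
  set M : Fin n → ℕ := fun y => ∑ x, N x (τ x y) with hMdef
  set Mo : Fin n → ℕ := fun y => ∑ x, N x (τopt x y) with hModef
  have hMsum : ∑ y, M y = Ntot := by
    rw [hNtotdef, Finset.sum_comm]
    exact Finset.sum_congr rfl fun x _ => Equiv.sum_comp (τ x) (N x)
  have hMosum : ∑ y, Mo y = Ntot := by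
    rw [hNtotdef, Finset.sum_comm]
    exact Finset.sum_congr rfl fun x _ => Equiv.sum_comp (τopt x) (N x)
  have hMsumR : ∑ y, (M y : ℝ) = Rr := by
    rw [hRrdef, ← hMsum]; push_cast; ring
  have hMosumR : ∑ y, (Mo y : ℝ) = Rr := by
    rw [hRrdef, ← hMosum]; push_cast; ring
  have hL : ∑ x, ∑ y, (N x (τ x y) : ℝ) * Real.log (γ y)
      = ∑ y, (M y : ℝ) * Real.log (γ y) := by
    rw [Finset.sum_comm]
    refine Finset.sum_congr rfl fun y _ => ?_
    rw [hMdef]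
    push_cast
    rw [Finset.sum_mul]
  have hRt : ∑ x, ∑ y, (N x (τopt x y) : ℝ) *
        Real.log ((∑ x', (N x' (τopt x' y) : ℝ)) / ((∑ x', ∑ y', N x' y' : ℕ) : ℝ))
      = ∑ y, (Mo y : ℝ) * Real.log ((Mo y : ℝ) / Rr) := by
    rw [Finset.sum_comm]
    refine Finset.sum_congr rfl fun y _ => ?_
    have h1 : (∑ x', (N x' (τopt x' y) : ℝ)) = (Mo y : ℝ) := by
      rw [hModef]; push_cast; ring
    rw [h1, ← hNtotdef, ← hRrdef, ← Finset.sum_mul, h1]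
  rw [hL, hRt]
  -- Gibbs inequality
  have gibbs : ∑ y, (M y : ℝ) * Real.log (γ y)
      ≤ ∑ y, (M y : ℝ) * Real.log ((M y : ℝ) / Rr) := by
    have key : ∀ y : Fin n,
        (M y : ℝ) * Real.log (γ y) - (M y : ℝ) * Real.log ((M y : ℝ) / Rr)
          ≤ γ y * Rr - (M y : ℝ) := by
      intro y
      rcases Nat.eq_zero_or_pos (M y) with h0 | hpos
      · rw [h0]
        simp only [Nat.cast_zero, zero_mul, sub_zero, sub_self]
        have := hγ0 y
        positivity
      · have hMR : (0 : ℝ) < (M y : ℝ) := by exact_mod_cast hpos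
        have hlog : Real.log (γ y * Rr / (M y : ℝ)) ≤ γ y * Rr / (M y : ℝ) - 1 :=
          Real.log_le_sub_one_of_pos (div_pos (mul_pos (hγ0 y) hR0) hMR)
        have hsplit : Real.log (γ y * Rr / (M y : ℝ))
            = Real.log (γ y) - Real.log ((M y : ℝ) / Rr) := by
          rw [Real.log_div (ne_of_gt (mul_pos (hγ0 y) hR0)) (ne_of_gt hMR),
            Real.log_mul (ne_of_gt (hγ0 y)) (ne_of_gt hR0),
            Real.log_div (ne_of_gt hMR) (ne_of_gt hR0)]
          ring
        rw [hsplit] at hlog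
        have hmul := mul_le_mul_of_nonneg_left hlog (le_of_lt hMR)
        have hfs : (M y : ℝ) * (γ y * Rr / (M y : ℝ) - 1) = γ y * Rr - (M y : ℝ) := by
          field_simp
        rw [hfs, mul_sub] at hmul
        linarith
    have h1 := Finset.sum_le_sum (fun y (_ : y ∈ univ) => key y)
    rw [Finset.sum_sub_distrib] at h1
    have h2 : ∑ y, (γ y * Rr - (M y : ℝ)) = 0 := by
      rw [Finset.sum_sub_distrib, ← Finset.sum_mul, hγ1, one_mul, hMsumR, sub_self]
    rw [h2] at h1
    linarith
  -- splitting the log of a quotient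
  have hsplitsum : ∀ K : Fin n → ℕ, (∑ y, K y = Ntot) →
      ∑ y, (K y : ℝ) * Real.log ((K y : ℝ) / Rr)
        = ∑ y, (K y : ℝ) * Real.log (K y) - Rr * Real.log Rr := by
    intro K hK
    have hterm : ∀ y : Fin n, (K y : ℝ) * Real.log ((K y : ℝ) / Rr)
        = (K y : ℝ) * Real.log (K y) - (K y : ℝ) * Real.log Rr := by
      intro y
      rcases Nat.eq_zero_or_pos (K y) with h0 | hpos
      · rw [h0]; simp
      · have : (0 : ℝ) < (K y : ℝ) := by exact_mod_cast hpos
        rw [Real.log_div (ne_of_gt this) (ne_of_gt hR0), mul_sub]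
    rw [Finset.sum_congr rfl (fun y _ => hterm y), Finset.sum_sub_distrib,
      ← Finset.sum_mul]
    have hKR : ∑ y, (K y : ℝ) = Rr := by
      rw [hRrdef, ← hK]; push_cast; ring
    rw [hKR]
  -- sorting permutation for M
  set ρ : Equiv.Perm (Fin n) := (Fin.revPerm).trans (Tuple.sort M) with hρdef
  have hρa : ∀ i j : Fin n, i ≤ j → M (ρ j) ≤ M (ρ i) := by
    intro i j hij
    have h1 : Fin.rev j ≤ Fin.rev i := Fin.rev_le_rev.mpr hij
    have h2 := Tuple.monotone_sort M h1
    simpa [hρdef, Equiv.trans_apply] using h2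
  have hMoa : ∀ i j : Fin n, i ≤ j → Mo j ≤ Mo i := by
    intro i j hij
    exact Finset.sum_le_sum fun x _ => hτopt x i j hij
  set Q : ℕ → ℕ := fun i => if h : i < n then M (ρ ⟨i, h⟩) else 0 with hQdef
  set P : ℕ → ℕ := fun i => if h : i < n then Mo ⟨i, h⟩ else 0 with hPdef
  have hQa : ∀ i j : ℕ, i ≤ j → Q j ≤ Q i := by
    intro i j hij
    by_cases hj : j < n
    · have hi : i < n := lt_of_le_of_lt hij hj
      simp only [hQdef, dif_pos hi, dif_pos hj]
      exact hρa ⟨i, hi⟩ ⟨j, hj⟩ hij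
    · simp [hQdef, hj]
  have hPa : ∀ i j : ℕ, i ≤ j → P j ≤ P i := by
    intro i j hij
    by_cases hj : j < n
    · have hi : i < n := lt_of_le_of_lt hij hj
      simp only [hPdef, dif_pos hi, dif_pos hj]
      exact hMoa ⟨i, hi⟩ ⟨j, hj⟩ hij
    · simp [hPdef, hj]
  have hfiltn : univ.filter (fun i : Fin n => i.val < n) = univ := by
    ext i; simp [i.is_lt]
  have hQtot : ∑ i ∈ range n, Q i = Ntot := by
    rw [hQdef, range_filter_sum n n le_rfl (fun y => M (ρ y)), hfiltn,
      Equiv.sum_comp ρ M]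
    exact hMsum
  have hPtot : ∑ i ∈ range n, P i = Ntot := by
    rw [hPdef, range_filter_sum n n le_rfl Mo, hfiltn]
    exact hMosum
  have hprefix : ∀ k : ℕ, ∑ i ∈ range k, Q i ≤ ∑ i ∈ range k, P i := by
    intro k
    by_cases hk : k ≤ n
    · rw [hQdef, hPdef, range_filter_sum n k hk (fun y => M (ρ y)),
        range_filter_sum n k hk Mo]
      simp only [hMdef, hModef]
      rw [Finset.sum_comm, Finset.sum_comm
        (s := univ.filter (fun i : Fin n => i.val < k)) (t := univ)]
      refine Finset.sum_le_sum fun x _ => ?_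
      have hinj : Function.Injective (fun i => (τopt x)⁻¹ (τ x (ρ i))) := by
        intro a b hab
        simp only at hab
        exact ρ.injective (EquivLike.injective (τ x) (EquivLike.injective (τopt x)⁻¹ hab))
      have := topk n (fun y => N x (τopt x y)) (fun i j hij => hτopt x i j hij) k hk
        (fun i => (τopt x)⁻¹ (τ x (ρ i))) hinj
      simpa using this
    · push_neg at hk
      have h1 : ∑ i ∈ range k, Q i = ∑ i ∈ range n, Q i := by
        refine (Finset.sum_subset (Finset.range_subset_range.mpr (le_of_lt hk)) ?_).symm
        intro i _ hni
        have : ¬ i < n := fun h => hni (mem_range.mpr h)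
        simp [hQdef, this]
      have h2 : ∑ i ∈ range k, P i = ∑ i ∈ range n, P i := by
        refine (Finset.sum_subset (Finset.range_subset_range.mpr (le_of_lt hk)) ?_).symm
        intro i _ hni
        have : ¬ i < n := fun h => hni (mem_range.mpr h)
        simp [hPdef, this]
      rw [h1, h2, hQtot, hPtot]
  -- Karamata
  set cfun : ℕ → ℝ := fun i => if Q i = 0 then 0 else 1 + Real.log (Q i) with hcdef
  have hca : ∀ i j : ℕ, i ≤ j → cfun j ≤ cfun i := by
    intro i j hij
    simp only [hcdef]
    by_cases hj : Q j = 0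
    · rw [if_pos hj]
      by_cases hi : Q i = 0
      · rw [if_pos hi]
      · rw [if_neg hi]
        have h1 : (1 : ℝ) ≤ (Q i : ℝ) := by
          exact_mod_cast Nat.one_le_iff_ne_zero.mpr hi
        have := Real.log_nonneg h1
        linarith
    · have hi : Q i ≠ 0 := by
        intro h
        exact hj (Nat.le_zero.mp (h ▸ hQa i j hij))
      rw [if_neg hj, if_neg hi]
      have h1 : (0 : ℝ) < (Q j : ℝ) := by
        exact_mod_cast Nat.pos_iff_ne_zero.mpr hj
      have h2 : (Q j : ℝ) ≤ (Q i : ℝ) := by exact_mod_cast hQa i j hij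
      have := Real.log_le_log h1 h2
      linarith
  set d : ℕ → ℝ := fun i => (P i : ℝ) - (Q i : ℝ) with hddef
  have hdpre : ∀ k : ℕ, 0 ≤ ∑ i ∈ range k, d i := by
    intro k
    rw [hddef]
    rw [Finset.sum_sub_distrib, sub_nonneg]
    have := hprefix k
    push_cast
    exact_mod_cast this
  have hdtot : ∑ i ∈ range n, d i = 0 := by
    rw [hddef, Finset.sum_sub_distrib]
    have h1 : ∑ i ∈ range n, (P i : ℝ) = (Ntot : ℝ) := by
      rw [← hPtot]; push_cast; ring
    have h2 : ∑ i ∈ range n, (Q i : ℝ) = (Ntot : ℝ) := by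
      rw [← hQtot]; push_cast; ring
    rw [h1, h2, sub_self]
  have habel := abel_nonneg cfun d n hca hdpre hdtot
  have hpt : ∀ i : ℕ, cfun i * d i
      ≤ (P i : ℝ) * Real.log (P i) - (Q i : ℝ) * Real.log (Q i) := by
    intro i
    simp only [hcdef, hddef]
    exact pt_lemma (P i) (Q i)
  have hsum := Finset.sum_le_sum (fun i (_ : i ∈ range n) => hpt i)
  have hkar : ∑ i ∈ range n, (Q i : ℝ) * Real.log (Q i)
      ≤ ∑ i ∈ range n, (P i : ℝ) * Real.log (P i) := by
    have h := le_trans habel hsum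
    rw [Finset.sum_sub_distrib] at h
    linarith
  have hQconv : ∑ y, (M y : ℝ) * Real.log (M y)
      = ∑ i ∈ range n, (Q i : ℝ) * Real.log (Q i) := by
    rw [← Equiv.sum_comp ρ (fun y => (M y : ℝ) * Real.log (M y)),
      ← Fin.sum_univ_eq_sum_range (fun i => (Q i : ℝ) * Real.log (Q i)) n]
    refine Finset.sum_congr rfl fun y _ => ?_
    simp [hQdef, y.is_lt]
  have hPconv : ∑ y, (Mo y : ℝ) * Real.log (Mo y)
      = ∑ i ∈ range n, (P i : ℝ) * Real.log (P i) := by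
    rw [← Fin.sum_univ_eq_sum_range (fun i => (P i : ℝ) * Real.log (P i)) n]
    refine Finset.sum_congr rfl fun y _ => ?_
    simp [hPdef, y.is_lt]
  calc ∑ y, (M y : ℝ) * Real.log (γ y)
      ≤ ∑ y, (M y : ℝ) * Real.log ((M y : ℝ) / Rr) := gibbs
    _ = ∑ y, (M y : ℝ) * Real.log (M y) - Rr * Real.log Rr := hsplitsum M hMsum
    _ ≤ ∑ y, (Mo y : ℝ) * Real.log (Mo y) - Rr * Real.log Rr := by
        rw [hQconv, hPconv]; linarith
    _ = ∑ y, (Mo y : ℝ) * Real.log ((Mo y : ℝ) / Rr) := (hsplitsum Mo hMosum).symm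
end
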